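/- arXiv:2101.01572 — 3 statements merged into one kernel-verified Lean document; each statement's English description precedes it below -/
import Mathlib

section
/- Let L_c > 0, δ > 0, and 0 ≤ ℓ ≤ y ≤ u ≤ 1 with u − ℓ > δ. Let F, F̂ : [0,1] → ℝ be nondecreasing functions with F(u) − F(ℓ) ≥ L_c(u − ℓ). Let w ≥ 0 and assume |(F̂(u) − F̂(y)) − (F(u) − F(y))| ≤ w and |(F̂(u) − F̂(ℓ)) − (F(u) − F(ℓ))| ≤ w. Then (F(u) − F(y))/(F(u) − F(ℓ)) ≤ (F̂(u) − F̂(y))/max{F̂(u) − F̂(ℓ), L_c(u − ℓ)} + 2w/(L_c·δ). -/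
/-- The true conditional probability `(F(u) - F(y))/(F(u) - F(ℓ))` never exceeds
the upper confidence bound built from the empirical estimate `F̂`. -/
theorem stmt_2 (Lc δ ℓ y u w : ℝ) (F Fhat : ℝ → ℝ)
    (hLc : 0 < Lc) (hδ : 0 < δ)
    (hℓ : 0 ≤ ℓ) (hℓy : ℓ ≤ y) (hyu : y ≤ u) (hu : u ≤ 1)
    (huℓ : δ < u - ℓ)
    (hFmono : MonotoneOn F (Set.Icc (0:ℝ) 1))
    (hFhatmono : MonotoneOn Fhat (Set.Icc (0:ℝ) 1))
    (hFlow : Lc * (u - ℓ) ≤ F u - F ℓ)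
    (hw : 0 ≤ w)
    (h1 : |(Fhat u - Fhat y) - (F u - F y)| ≤ w)
    (h2 : |(Fhat u - Fhat ℓ) - (F u - F ℓ)| ≤ w) :
    (F u - F y) / (F u - F ℓ) ≤
      (Fhat u - Fhat y) / max (Fhat u - Fhat ℓ) (Lc * (u - ℓ)) + 2 * w / (Lc * δ) := by
  have hmℓ : ℓ ∈ Set.Icc (0:ℝ) 1 := ⟨hℓ, by linarith⟩
  have hmy : y ∈ Set.Icc (0:ℝ) 1 := ⟨by linarith, by linarith⟩
  have hmu : u ∈ Set.Icc (0:ℝ) 1 := ⟨by linarith, hu⟩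
  have h1a := abs_le.mp h1
  have h2a := abs_le.mp h2
  set A := F u - F y with hAdef
  set B := F u - F ℓ with hBdef
  set Ah := Fhat u - Fhat y with hAhdef
  set Bh := max (Fhat u - Fhat ℓ) (Lc * (u - ℓ)) with hBhdef
  have hA0 : 0 ≤ A := by have := hFmono hmy hmu hyu; simp [hAdef]; linarith
  have hAh0 : 0 ≤ Ah := by have := hFhatmono hmy hmu hyu; simp [hAhdef]; linarith
  have hAhBh : Ah ≤ Bh := by
    have := hFhatmono hmℓ hmy hℓy
    exact le_trans (by simp [hAhdef]; linarith) (le_max_left _ _)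
  have hBpos : 0 < B := lt_of_lt_of_le (by nlinarith) hFlow
  have hBhpos : 0 < Bh := lt_of_lt_of_le (by nlinarith) (le_max_right _ _)
  have hBBh : B ≤ Bh + w := by
    have := le_max_left (Fhat u - Fhat ℓ) (Lc * (u - ℓ))
    simp only [hBhdef, hBdef] at *; linarith [h2a.1]
  have hAAh : A ≤ Ah + w := by linarith [h1a.2]
  have hBhB : Bh ≤ B + w := by
    apply max_le
    · linarith [h2a.2]
    · linarith
  have hBLcδ : Lc * δ ≤ B := le_trans (by nlinarith) hFlow
  have hstep : A / B ≤ Ah / Bh + 2 * w / B := by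
    rw [div_add_div _ _ (ne_of_gt hBhpos) (ne_of_gt hBpos),
      div_le_div_iff₀ hBpos (mul_pos hBhpos hBpos)]
    have h3 : A * Bh ≤ Ah * B + 2 * w * Bh := by
      nlinarith [mul_le_mul_of_nonneg_right hAAh hBhpos.le,
        mul_le_mul_of_nonneg_left hBhB hAh0, mul_le_mul_of_nonneg_left hAhBh hw]
    nlinarith [mul_le_mul_of_nonneg_right h3 hBpos.le]
  have hlast : 2 * w / B ≤ 2 * w / (Lc * δ) := by
    apply div_le_div_of_nonneg_left (by linarith) (by positivity) hBLcδ
  linarith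
end

section
/- Let a, b, â, b̂ ∈ [0,1] with a + b = 1 and â + b̂ = 1, and let p₁, p₂, p̂₁, p̂₂ ∈ [0,1] with p₁ + p₂ < 1 and p̂₁ + p̂₂ < 1. Then | b(1 − p₂)/(a(1 − p₁) + b(1 − p₂)) − b̂(1 − p̂₂)/(â(1 − p̂₁) + b̂(1 − p̂₂)) | ≤ (|a − â| + |b − b̂| + |p₁ − p̂₁| + |p₂ − p̂₂|) / ((1 − p₁ − p₂)(1 − p̂₁ − p̂₂)). -/
lemma prod4_diff (x₁ x₂ x₃ x₄ y₁ y₂ y₃ y₄ : ℝ)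
    (hx₁ : x₁ ∈ Set.Icc (0:ℝ) 1) (hx₂ : x₂ ∈ Set.Icc (0:ℝ) 1)
    (hx₃ : x₃ ∈ Set.Icc (0:ℝ) 1) (hx₄ : x₄ ∈ Set.Icc (0:ℝ) 1)
    (hy₁ : y₁ ∈ Set.Icc (0:ℝ) 1) (hy₂ : y₂ ∈ Set.Icc (0:ℝ) 1)
    (hy₃ : y₃ ∈ Set.Icc (0:ℝ) 1) (hy₄ : y₄ ∈ Set.Icc (0:ℝ) 1) :
    |x₁*x₂*x₃*x₄ - y₁*y₂*y₃*y₄| ≤ |x₁-y₁| + |x₂-y₂| + |x₃-y₃| + |x₄-y₄| := by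
  obtain ⟨hx₁0, hx₁1⟩ := hx₁; obtain ⟨hx₂0, hx₂1⟩ := hx₂
  obtain ⟨hx₃0, hx₃1⟩ := hx₃; obtain ⟨hx₄0, hx₄1⟩ := hx₄
  obtain ⟨hy₁0, hy₁1⟩ := hy₁; obtain ⟨hy₂0, hy₂1⟩ := hy₂
  obtain ⟨hy₃0, hy₃1⟩ := hy₃; obtain ⟨hy₄0, hy₄1⟩ := hy₄
  have key : x₁*x₂*x₃*x₄ - y₁*y₂*y₃*y₄ =
      (x₁-y₁)*(x₂*x₃*x₄) + (x₂-y₂)*(y₁*x₃*x₄) + (x₃-y₃)*(y₁*y₂*x₄)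
        + (x₄-y₄)*(y₁*y₂*y₃) := by ring
  rw [key]
  have t1 : |(x₁-y₁)*(x₂*x₃*x₄)| ≤ |x₁-y₁| := by
    rw [abs_mul]
    have : |x₂*x₃*x₄| ≤ 1 := by
      rw [abs_of_nonneg (by positivity)]
      exact mul_le_one₀ (mul_le_one₀ hx₂1 hx₃0 hx₃1) hx₄0 hx₄1
    nlinarith [abs_nonneg (x₁-y₁)]
  have t2 : |(x₂-y₂)*(y₁*x₃*x₄)| ≤ |x₂-y₂| := by
    rw [abs_mul]
    have : |y₁*x₃*x₄| ≤ 1 := by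
      rw [abs_of_nonneg (by positivity)]
      exact mul_le_one₀ (mul_le_one₀ hy₁1 hx₃0 hx₃1) hx₄0 hx₄1
    nlinarith [abs_nonneg (x₂-y₂)]
  have t3 : |(x₃-y₃)*(y₁*y₂*x₄)| ≤ |x₃-y₃| := by
    rw [abs_mul]
    have : |y₁*y₂*x₄| ≤ 1 := by
      rw [abs_of_nonneg (by positivity)]
      exact mul_le_one₀ (mul_le_one₀ hy₁1 hy₂0 hy₂1) hx₄0 hx₄1
    nlinarith [abs_nonneg (x₃-y₃)]
  have t4 : |(x₄-y₄)*(y₁*y₂*y₃)| ≤ |x₄-y₄| := by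
    rw [abs_mul]
    have : |y₁*y₂*y₃| ≤ 1 := by
      rw [abs_of_nonneg (by positivity)]
      exact mul_le_one₀ (mul_le_one₀ hy₁1 hy₂0 hy₂1) hy₃0 hy₃1
    nlinarith [abs_nonneg (x₄-y₄)]
  calc |(x₁-y₁)*(x₂*x₃*x₄) + (x₂-y₂)*(y₁*x₃*x₄) + (x₃-y₃)*(y₁*y₂*x₄)
          + (x₄-y₄)*(y₁*y₂*y₃)|
      ≤ |(x₁-y₁)*(x₂*x₃*x₄)| + |(x₂-y₂)*(y₁*x₃*x₄)| + |(x₃-y₃)*(y₁*y₂*x₄)|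
          + |(x₄-y₄)*(y₁*y₂*y₃)| := by
        exact (abs_add_le _ _).trans (by gcongr <;> exact (abs_add_le _ _).trans (by gcongr; exact abs_add_le _ _))
    _ ≤ |x₁-y₁| + |x₂-y₂| + |x₃-y₃| + |x₄-y₄| := by linarith

/-- Error bound for the conditional probability that the residual patience
decreased given that no feedback was received, computed with true vs. estimated
parameters. -/
theorem stmt_3 (a b ahat bhat p₁ p₂ phat₁ phat₂ : ℝ)
    (ha : a ∈ Set.Icc (0:ℝ) 1) (hb : b ∈ Set.Icc (0:ℝ) 1)
    (hahat : ahat ∈ Set.Icc (0:ℝ) 1) (hbhat : bhat ∈ Set.Icc (0:ℝ) 1)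
    (hab : a + b = 1) (hab' : ahat + bhat = 1)
    (hp₁ : p₁ ∈ Set.Icc (0:ℝ) 1) (hp₂ : p₂ ∈ Set.Icc (0:ℝ) 1)
    (hphat₁ : phat₁ ∈ Set.Icc (0:ℝ) 1) (hphat₂ : phat₂ ∈ Set.Icc (0:ℝ) 1)
    (hpsum : p₁ + p₂ < 1) (hpsum' : phat₁ + phat₂ < 1) :
    |b * (1 - p₂) / (a * (1 - p₁) + b * (1 - p₂)) -
        bhat * (1 - phat₂) / (ahat * (1 - phat₁) + bhat * (1 - phat₂))| ≤
      (|a - ahat| + |b - bhat| + |p₁ - phat₁| + |p₂ - phat₂|) /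
        ((1 - p₁ - p₂) * (1 - phat₁ - phat₂)) := by
  obtain ⟨ha0, ha1⟩ := ha; obtain ⟨hb0, hb1⟩ := hb
  obtain ⟨hah0, hah1⟩ := hahat; obtain ⟨hbh0, hbh1⟩ := hbhat
  obtain ⟨hp₁0, hp₁1⟩ := hp₁; obtain ⟨hp₂0, hp₂1⟩ := hp₂
  obtain ⟨hph₁0, hph₁1⟩ := hphat₁; obtain ⟨hph₂0, hph₂1⟩ := hphat₂
  set D := a * (1 - p₁) + b * (1 - p₂) with hD
  set Dh := ahat * (1 - phat₁) + bhat * (1 - phat₂) with hDh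
  have hs : (0:ℝ) < 1 - p₁ - p₂ := by linarith
  have hs' : (0:ℝ) < 1 - phat₁ - phat₂ := by linarith
  have hDge : 1 - p₁ - p₂ ≤ D := by
    have : D = a * (1 - p₁) + b * (1 - p₂) := rfl
    nlinarith
  have hDhge : 1 - phat₁ - phat₂ ≤ Dh := by
    have : Dh = ahat * (1 - phat₁) + bhat * (1 - phat₂) := rfl
    nlinarith
  have hDpos : 0 < D := lt_of_lt_of_le hs hDge
  have hDhpos : 0 < Dh := lt_of_lt_of_le hs' hDhge
  have hdiff : b * (1 - p₂) / D - bhat * (1 - phat₂) / Dh =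
      (b * (1 - p₂) * (ahat * (1 - phat₁)) - bhat * (1 - phat₂) * (a * (1 - p₁)))
        / (D * Dh) := by
    rw [div_sub_div _ _ (ne_of_gt hDpos) (ne_of_gt hDhpos)]
    congr 1
    simp only [hD, hDh]; ring
  rw [hdiff, abs_div, abs_of_pos (by positivity : (0:ℝ) < D * Dh)]
  have hnum : |b * (1 - p₂) * (ahat * (1 - phat₁)) - bhat * (1 - phat₂) * (a * (1 - p₁))|
      ≤ |a - ahat| + |b - bhat| + |p₁ - phat₁| + |p₂ - phat₂| := by
    have := prod4_diff b (1 - p₂) ahat (1 - phat₁) bhat (1 - phat₂) a (1 - p₁)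
      ⟨hb0, hb1⟩ ⟨by linarith, by linarith⟩ ⟨hah0, hah1⟩ ⟨by linarith, by linarith⟩
      ⟨hbh0, hbh1⟩ ⟨by linarith, by linarith⟩ ⟨ha0, ha1⟩ ⟨by linarith, by linarith⟩
    have e1 : b * (1 - p₂) * ahat * (1 - phat₁) - bhat * (1 - phat₂) * a * (1 - p₁)
        = b * (1 - p₂) * (ahat * (1 - phat₁)) - bhat * (1 - phat₂) * (a * (1 - p₁)) := by
      ring
    rw [e1] at this
    calc |b * (1 - p₂) * (ahat * (1 - phat₁)) - bhat * (1 - phat₂) * (a * (1 - p₁))|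
        ≤ |b - bhat| + |1 - p₂ - (1 - phat₂)| + |ahat - a| + |1 - phat₁ - (1 - p₁)| := this
      _ = |a - ahat| + |b - bhat| + |p₁ - phat₁| + |p₂ - phat₂| := by
          rw [show (1 - p₂ - (1 - phat₂)) = -(p₂ - phat₂) by ring,
            show (1 - phat₁ - (1 - p₁)) = p₁ - phat₁ by ring,
            abs_neg, abs_sub_comm ahat a]
          ring
  have hden : (1 - p₁ - p₂) * (1 - phat₁ - phat₂) ≤ D * Dh := by
    exact mul_le_mul hDge hDhge (le_of_lt hs') (le_of_lt hDpos)
  exact div_le_div₀ (by positivity) hnum (by positivity) hden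
end

section
/- Let B > 0, 0 < L < B, Δ > 0 and m ≥ 1 be given, and let X₁, …, X_m be independent identically distributed real random variables on a probability space such that almost surely 0 ≤ X_n ≤ B for each n, almost surely for each n either X_n = B or X_n ≥ L, and E[X₁] ≤ Δ·B. Let 0 < λ < 1, set λ̃ = √(log(1/λ)/(2Δ²m)) and c = (1 − Δ(1 + λ̃)) / (1 − L/B), and let K = #{ n ∈ {1,…,m} : X_n < B } be the number of indices with X_n < B. Then P(K ≥ c·m) ≥ 1 − λ. -/
/-!
Every index with `X n < B` contributes at least `L` to `∑ X n` and every other one exactly `B`,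
so `∑ X n ≥ B (m - K) + L K`. Hence `K < c m` forces `∑ X n` to exceed the bound `m Δ B` on its
mean by at least `Δ B λ̃ m`, and by Hoeffding's inequality for independent `[0, B]`-valued
variables this has probability at most `exp (-2 (Δ B λ̃ m)² / (m B²)) = λ`.
-/

open MeasureTheory ProbabilityTheory Finset Real

lemma le_sum_of_lt_imp_le {ι : Type*} (s : Finset ι) {f : ι → ℝ} {B L : ℝ}
    (hf : ∀ i ∈ s, f i < B → L ≤ f i) :
    B * ((#s : ℝ) - #{i ∈ s | f i < B}) + L * #{i ∈ s | f i < B} ≤ ∑ i ∈ s, f i := by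
  have hcard : ((#s : ℕ) : ℝ) - #{i ∈ s | f i < B} = #{i ∈ s | ¬ f i < B} := by
    rw [← card_filter_add_card_filter_not (s := s) (fun i => f i < B)]
    push_cast; ring
  rw [hcard, ← sum_filter_add_sum_filter_not s (fun i => f i < B), add_comm]
  gcongr
  · rw [mul_comm, ← nsmul_eq_mul, ← sum_const]
    exact sum_le_sum fun i hi => hf i (mem_filter.1 hi).1 (mem_filter.1 hi).2
  · rw [mul_comm, ← nsmul_eq_mul, ← sum_const]
    exact sum_le_sum fun i hi => not_lt.1 (mem_filter.1 hi).2

lemma div_mul_le_of_mul_sub_add_mul_lt {B L a m k : ℝ} (hB : 0 < B) (hLB : L < B)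
    (h : B * (m - k) + L * k < a * B * m) :
    (1 - a) / (1 - L / B) * m ≤ k := by
  have hBL : 0 < 1 - L / B := by rwa [sub_pos, div_lt_one hB]
  rw [div_mul_eq_mul_div, div_le_iff₀ hBL]
  refine le_of_mul_le_mul_left ?_ hB
  rw [show B * (k * (1 - L / B)) = (B - L) * k by field_simp]
  linarith

section

variable {Ω : Type*} [MeasurableSpace Ω] {μ : Measure Ω} [IsProbabilityMeasure μ]

lemma measureReal_sum_sub_integral_ge_le_of_mem_Icc {ι : Type*} {X : ι → Ω → ℝ}
    (hindep : iIndepFun X μ) (hmeas : ∀ i, AEMeasurable (X i) μ) {a b : ℝ}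
    (hab : ∀ i, ∀ᵐ ω ∂μ, X i ω ∈ Set.Icc a b) (s : Finset ι) {ε : ℝ} (hε : 0 ≤ ε) :
    μ.real {ω | ε ≤ ∑ i ∈ s, (X i ω - μ[X i])} ≤ exp (-2 * ε ^ 2 / (#s * (b - a) ^ 2)) := by
  have hcentered : iIndepFun (fun i ω => X i ω - μ[X i]) μ := by
    exact hindep.comp (fun i x => x - μ[X i]) fun i => measurable_id.sub_const _
  refine (HasSubgaussianMGF.measure_sum_ge_le_of_iIndepFun hcentered
    (fun i _ => hasSubgaussianMGF_of_mem_Icc (hmeas i) (hab i)) hε).trans_eq ?_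
  congr 1
  simp only [sum_const, nsmul_eq_mul]
  push_cast
  rw [Real.norm_eq_abs, div_pow, sq_abs,
    show 2 * ((#s : ℝ) * ((b - a) ^ 2 / 2 ^ 2)) = #s * (b - a) ^ 2 / 2 by ring,
    div_div_eq_mul_div]
  ring

lemma ofReal_one_sub_le_measure_of_ae_or {s t : Set Ω} {p : ℝ}
    (hst : ∀ᵐ ω ∂μ, ω ∈ s ∨ ω ∈ t) (hs : μ.real s ≤ p) : ENNReal.ofReal (1 - p) ≤ μ t := by
  have hcover : 1 ≤ μ s + μ t := calc
    1 = μ Set.univ := measure_univ.symm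
    _ ≤ μ (s ∪ t) := measure_mono_ae (by filter_upwards [hst] with ω h _ using h)
    _ ≤ μ s + μ t := measure_union_le s t
  have := ENNReal.toReal_mono (by finiteness) hcover
  rw [ENNReal.toReal_one, ENNReal.toReal_add (by finiteness) (by finiteness)] at this
  exact ENNReal.ofReal_le_of_le_toReal (by rw [measureReal_def] at hs; linarith)

end

theorem stmt_9_general {Ω : Type*} [MeasurableSpace Ω] (μ : Measure Ω) [IsProbabilityMeasure μ]
    (B L Δ : ℝ) (hB : 0 < B) (hLB : L < B) (hΔ : 0 < Δ)
    (m : ℕ) (hm : 1 ≤ m)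
    (X : Fin m → Ω → ℝ)
    (hindep : iIndepFun X μ)
    (hident : ∀ i j, IdentDistrib (X i) (X j) μ μ)
    (hrange : ∀ n, ∀ᵐ ω ∂μ, 0 ≤ X n ω ∧ X n ω ≤ B)
    (halt : ∀ n, ∀ᵐ ω ∂μ, X n ω = B ∨ L ≤ X n ω)
    (hmean : ∀ n, ∫ ω, X n ω ∂μ ≤ Δ * B)
    (lam : ℝ) (hlam0 : 0 < lam) (hlam1 : lam < 1)
    (lamt c : ℝ)
    (hlamt : lamt = Real.sqrt (Real.log (1 / lam) / (2 * Δ ^ 2 * m)))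
    (hc : c = (1 - Δ * (1 + lamt)) / (1 - L / B))
    (K : Ω → ℕ)
    (hK : ∀ ω, K ω = (Finset.univ.filter (fun n => X n ω < B)).card) :
    ENNReal.ofReal (1 - lam) ≤ μ {ω | c * m ≤ (K ω : ℝ)} := by
  have hm0 : (0 : ℝ) < m := by exact_mod_cast hm
  have hlamt0 : 0 ≤ lamt := hlamt ▸ sqrt_nonneg _
  have hlamt_sq : 2 * Δ ^ 2 * m * lamt ^ 2 = log (1 / lam) := by
    rw [hlamt, sq_sqrt (div_nonneg (log_nonneg (one_le_one_div hlam0 hlam1.le)) (by positivity))]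
    field_simp
  have hbad : μ.real {ω | Δ * B * lamt * m ≤ ∑ i, (X i ω - μ[X i])} ≤ lam := by
    refine (measureReal_sum_sub_integral_ge_le_of_mem_Icc hindep
      (fun i => (hident i i).aemeasurable_fst) hrange univ (by positivity)).trans_eq ?_
    rw [card_univ, Fintype.card_fin,
      show -2 * (Δ * B * lamt * m) ^ 2 / (m * (B - 0) ^ 2) = -(2 * Δ ^ 2 * m * lamt ^ 2) by
        field_simp [hB.ne']; ring,
      hlamt_sq, one_div, log_inv, neg_neg, exp_log hlam0]
  refine ofReal_one_sub_le_measure_of_ae_or ?_ hbad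
  filter_upwards [ae_all_iff.2 halt] with ω hω
  refine or_iff_not_imp_left.2 fun hlt => ?_
  have hcount := le_sum_of_lt_imp_le univ (f := fun i => X i ω) (B := B) (L := L)
    fun i _ hi => (hω i).resolve_left hi.ne
  rw [card_univ, Fintype.card_fin, ← hK] at hcount
  have hmean_sum := sum_le_sum fun i (_ : i ∈ univ) => hmean i
  simp only [not_le, sum_sub_distrib, sum_const, card_univ, Fintype.card_fin,
    nsmul_eq_mul] at hlt hmean_sum
  exact hc ▸ div_mul_le_of_mul_sub_add_mul_lt hB hLB (by linarith)

/-- Concentration of the number of non-abandoning users in the exploration set: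
`X n` is the budget consumed by user `n` (which is `B` if the user abandons and at
least `L` otherwise), and `K` counts the users with `X n < B`. -/
theorem stmt_9 {Ω : Type*} [MeasurableSpace Ω] (μ : Measure Ω) [IsProbabilityMeasure μ]
    (B L Δ : ℝ) (hB : 0 < B) (hL0 : 0 < L) (hLB : L < B) (hΔ : 0 < Δ)
    (m : ℕ) (hm : 1 ≤ m)
    (X : Fin m → Ω → ℝ)
    (hindep : iIndepFun X μ)
    (hident : ∀ i j, IdentDistrib (X i) (X j) μ μ)
    (hrange : ∀ n, ∀ᵐ ω ∂μ, 0 ≤ X n ω ∧ X n ω ≤ B)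
    (halt : ∀ n, ∀ᵐ ω ∂μ, X n ω = B ∨ L ≤ X n ω)
    (hmean : ∀ n, ∫ ω, X n ω ∂μ ≤ Δ * B)
    (lam : ℝ) (hlam0 : 0 < lam) (hlam1 : lam < 1)
    (lamt c : ℝ)
    (hlamt : lamt = Real.sqrt (Real.log (1 / lam) / (2 * Δ ^ 2 * m)))
    (hc : c = (1 - Δ * (1 + lamt)) / (1 - L / B))
    (K : Ω → ℕ)
    (hK : ∀ ω, K ω = (Finset.univ.filter (fun n => X n ω < B)).card) :
    ENNReal.ofReal (1 - lam) ≤ μ {ω | c * m ≤ (K ω : ℝ)} :=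
  stmt_9_general μ B L Δ hB hLB hΔ m hm X hindep hident hrange halt hmean lam hlam0 hlam1 lamt c
    hlamt hc K hK
end
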